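/- arXiv:2409.17544 — 6 statements merged into one kernel-verified Lean document; each statement's English description precedes it below -/
import Mathlib

section
/- Let m ≥ 2, let c be a generalized Omnibus weight tensor, let ρ ∈ [−1,1], and let s1 ≠ s2 ∈ {1,…,m}. Then ∑_{q=1}^m β_q(s1,s2)² ≤ 2m², and hence the induced correlation satisfies 𝔯(s1,s2) = 1 − ((1−ρ)/(2m²))·∑_{q=1}^m β_q(s1,s2)² ≥ ρ. -/
open Finset

/-- Cumulative weight `α(k,q) = ∑_ℓ c(q,k,ℓ)`. -/
noncomputable def alphaW (m : ℕ) (c : Fin m → Fin m → Fin m → ℝ) (k q : Fin m) : ℝ :=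
  ∑ ℓ, c q k ℓ

/-- `β_q(s1,s2) = α(s1,q) − α(s2,q)`. -/
noncomputable def betaW (m : ℕ) (c : Fin m → Fin m → Fin m → ℝ) (q s1 s2 : Fin m) : ℝ :=
  alphaW m c s1 q - alphaW m c s2 q

/-- Generalized Omnibus weight tensor. -/
def IsGenOmni (m : ℕ) (c : Fin m → Fin m → Fin m → ℝ) : Prop :=
  (∀ q i j, c q i j = c q j i) ∧
  (∀ q i j, c q i j ∈ Set.Icc (0:ℝ) 1) ∧
  (∀ i j, ∑ q, c q i j = 1)

/-
The cumulative weights `α(k,·)` are a row of `m` numbers in `[0, m]` summing to `m`. For `a, b ∈ [0, M]`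
one has `(a - b)² ≤ a² + b² ≤ M (a + b)`, so `∑_q β_q² ≤ m ∑_q (α(s1,q) + α(s2,q)) = 2m²`. Hence the
factor `∑_q β_q² / (2m²)` lies in `[0, 1]`, and `𝔯 = 1 - (1 - ρ) · factor ≥ 1 - (1 - ρ) = ρ`.
-/

theorem sq_sub_le_mul_add {a b M : ℝ} (ha : 0 ≤ a) (hb : 0 ≤ b) (haM : a ≤ M) (hbM : b ≤ M) :
    (a - b) ^ 2 ≤ M * (a + b) := by
  nlinarith [mul_nonneg ha hb]

theorem le_one_sub_div_mul {ρ S D : ℝ} (hρ : ρ ≤ 1) (hS : 0 ≤ S) (hSD : S ≤ D) :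
    ρ ≤ 1 - (1 - ρ) / D * S := by
  have hfactor : S / D ≤ 1 := div_le_one_of_le₀ hSD (hS.trans hSD)
  have : (1 - ρ) * (S / D) ≤ 1 - ρ := mul_le_of_le_one_right (by linarith) hfactor
  rw [div_mul_eq_mul_div, mul_div_assoc]
  linarith

namespace IsGenOmni

variable {m : ℕ} {c : Fin m → Fin m → Fin m → ℝ}

theorem alphaW_nonneg (hc : IsGenOmni m c) (k q : Fin m) : 0 ≤ alphaW m c k q :=
  sum_nonneg fun ℓ _ => (hc.2.1 q k ℓ).1

theorem alphaW_le (hc : IsGenOmni m c) (k q : Fin m) : alphaW m c k q ≤ m := by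
  calc alphaW m c k q ≤ ∑ _ℓ : Fin m, (1 : ℝ) := sum_le_sum fun ℓ _ => (hc.2.1 q k ℓ).2
    _ = m := by simp

theorem sum_alphaW (hc : IsGenOmni m c) (k : Fin m) : ∑ q, alphaW m c k q = m := by
  simp only [alphaW]
  rw [sum_comm]
  simp [hc.2.2]

theorem sum_sq_betaW_le (hc : IsGenOmni m c) (s1 s2 : Fin m) :
    ∑ q, betaW m c q s1 s2 ^ 2 ≤ 2 * (m : ℝ) ^ 2 :=
  calc ∑ q, betaW m c q s1 s2 ^ 2
      ≤ ∑ q, (m : ℝ) * (alphaW m c s1 q + alphaW m c s2 q) :=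
        sum_le_sum fun q _ => sq_sub_le_mul_add (hc.alphaW_nonneg s1 q) (hc.alphaW_nonneg s2 q)
          (hc.alphaW_le s1 q) (hc.alphaW_le s2 q)
    _ = 2 * (m : ℝ) ^ 2 := by
        rw [← mul_sum, sum_add_distrib, hc.sum_alphaW, hc.sum_alphaW]
        ring

end IsGenOmni

theorem stmt_1_general (m : ℕ) (c : Fin m → Fin m → Fin m → ℝ)
    (hc : IsGenOmni m c) (ρ : ℝ) (hρ : ρ ∈ Set.Icc (-1 : ℝ) 1)
    (s1 s2 : Fin m) :
    (∑ q, (betaW m c q s1 s2)^2 ≤ 2 * (m : ℝ)^2) ∧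
    1 - ((1 - ρ) / (2 * (m : ℝ)^2)) * ∑ q, (betaW m c q s1 s2)^2 ≥ ρ := by
  have hS := hc.sum_sq_betaW_le s1 s2
  exact ⟨hS, le_one_sub_div_mul hρ.2 (sum_nonneg fun q _ => sq_nonneg _) hS⟩

theorem stmt_1 (m : ℕ) (hm : 2 ≤ m) (c : Fin m → Fin m → Fin m → ℝ)
    (hc : IsGenOmni m c) (ρ : ℝ) (hρ : ρ ∈ Set.Icc (-1 : ℝ) 1)
    (s1 s2 : Fin m) (hs : s1 ≠ s2) :
    (∑ q, (betaW m c q s1 s2)^2 ≤ 2 * (m : ℝ)^2) ∧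
    1 - ((1 - ρ) / (2 * (m : ℝ)^2)) * ∑ q, (betaW m c q s1 s2)^2 ≥ ρ :=
  stmt_1_general m c hc ρ hρ s1 s2
end

section
/- Let m ≥ 2, let c be a WOMNI weight tensor, let ρ ∈ [−1,1], and let s1 ≠ s2 ∈ {1,…,m}. Then ∑_{q=1}^m β_q(s1,s2)² ≤ 2·(max_{q} α(q,q))² + (m − 2), and hence 𝔯(s1,s2) ≥ 1 − ((1−ρ)/(2m²))·( 2·(max_{q} α(q,q))² + m − 2 ). -/
/-!
Off the diagonal, `α(k,q) = c(q,q,k)` lies in `[0,1]`, while `1 ≤ α(q,q) ≤ M`. Hence each of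
the `m - 2` terms `β_q(s1,s2)²` with `q ∉ {s1,s2}` is the square of a difference of two numbers
in `[0,1]`, so at most `1`, and the two remaining ones are
`(α(s,s) - α(t,s))² ≤ α(s,s)² ≤ M²`. The bound on `𝔯` follows because its
coefficient `(1-ρ)/(2m²)` is nonnegative.
-/

open Finset

/-- WOMNI (weighted Omnibus) weight tensor. -/
def IsWOMNI (m : ℕ) (c : Fin m → Fin m → Fin m → ℝ) : Prop :=
  (∀ q i j, c q i j = c q j i) ∧
  (∀ q i j, q ≠ i → q ≠ j → c q i j = 0) ∧
  (∀ i, c i i i = 1) ∧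
  (∀ q i, q ≠ i → c q i i = 0) ∧
  (∀ i j, i ≠ j → c i i j ∈ Set.Icc (0:ℝ) 1 ∧ c i i j + c j i j = 1)

/-- The tensor induces flat correlation: `S(s1,s2) = ∑_q β_q(s1,s2)²` is the same
for all pairs `s1 ≠ s2`. -/
def InducesFlat (m : ℕ) (c : Fin m → Fin m → Fin m → ℝ) : Prop :=
  ∀ s1 s2 t1 t2 : Fin m, s1 ≠ s2 → t1 ≠ t2 →
    ∑ q, (betaW m c q s1 s2)^2 = ∑ q, (betaW m c q t1 t2)^2

theorem betaW_swap {m : ℕ} {c : Fin m → Fin m → Fin m → ℝ} (q s t : Fin m) :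
    betaW m c q t s = -betaW m c q s t := by
  simp only [betaW, neg_sub]

namespace IsWOMNI

variable {m : ℕ} {c : Fin m → Fin m → Fin m → ℝ}

theorem alphaW_of_ne (hc : IsWOMNI m c) {k q : Fin m} (hkq : k ≠ q) :
    alphaW m c k q = c q q k := by
  rw [alphaW, sum_eq_single_of_mem q (mem_univ q)
    fun ℓ _ hℓ => hc.2.1 q k ℓ hkq.symm (Ne.symm hℓ)]
  exact hc.1 q k q

theorem alphaW_mem_Icc_of_ne (hc : IsWOMNI m c) {k q : Fin m} (hkq : k ≠ q) :
    alphaW m c k q ∈ Set.Icc (0 : ℝ) 1 :=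
  hc.alphaW_of_ne hkq ▸ (hc.2.2.2.2 q k hkq.symm).1

theorem one_le_alphaW_self (hc : IsWOMNI m c) (k : Fin m) : 1 ≤ alphaW m c k k := by
  have hnonneg : ∀ ℓ ∈ univ, 0 ≤ c k k ℓ := fun ℓ _ => by
    rcases eq_or_ne k ℓ with rfl | hkℓ
    · exact (hc.2.2.1 k).symm ▸ zero_le_one
    · exact (hc.2.2.2.2 k ℓ hkℓ).1.1
  calc (1 : ℝ) = c k k k := (hc.2.2.1 k).symm
    _ ≤ alphaW m c k k := single_le_sum hnonneg (mem_univ k)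

theorem sq_betaW_le_one (hc : IsWOMNI m c) {q s t : Fin m} (hqs : q ≠ s) (hqt : q ≠ t) :
    betaW m c q s t ^ 2 ≤ 1 := by
  obtain ⟨hs₀, hs₁⟩ := hc.alphaW_mem_Icc_of_ne hqs.symm
  obtain ⟨ht₀, ht₁⟩ := hc.alphaW_mem_Icc_of_ne hqt.symm
  exact (sq_le_one_iff_abs_le_one _).2 (abs_sub_le_of_nonneg_of_le hs₀ hs₁ ht₀ ht₁)

theorem sq_betaW_self_le (hc : IsWOMNI m c) {s t : Fin m} (hst : s ≠ t) :
    betaW m c s s t ^ 2 ≤ alphaW m c s s ^ 2 := by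
  obtain ⟨ht₀, ht₁⟩ := hc.alphaW_mem_Icc_of_ne hst.symm
  have hs := hc.one_le_alphaW_self s
  exact pow_le_pow_left₀ (by rw [betaW]; linarith) (by rw [betaW]; linarith) 2

theorem sum_sq_betaW_le (hc : IsWOMNI m c) {s t : Fin m} (hst : s ≠ t) {M : ℝ}
    (hM : ∀ q, alphaW m c q q ≤ M) :
    ∑ q, betaW m c q s t ^ 2 ≤ 2 * M ^ 2 + ((m : ℝ) - 2) := by
  have hdiag (u : Fin m) : alphaW m c u u ^ 2 ≤ M ^ 2 :=
    pow_le_pow_left₀ (zero_le_one.trans (hc.one_le_alphaW_self u)) (hM u) 2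
  have hs : betaW m c s s t ^ 2 ≤ M ^ 2 := (hc.sq_betaW_self_le hst).trans (hdiag s)
  have ht : betaW m c t s t ^ 2 ≤ M ^ 2 := by
    rw [betaW_swap t t s, neg_sq]
    exact (hc.sq_betaW_self_le hst.symm).trans (hdiag t)
  have hrest : ∑ q ∈ univ \ {s, t}, betaW m c q s t ^ 2 ≤ #(univ \ {s, t}) := by
    simpa using sum_le_card_nsmul (univ \ {s, t}) (fun q => betaW m c q s t ^ 2) 1
      fun q hq => by
        simp only [mem_sdiff, mem_univ, mem_insert, mem_singleton, not_or, true_and] at hq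
        exact hc.sq_betaW_le_one hq.1 hq.2
  have hcard : (#(univ \ {s, t}) : ℝ) = m - 2 := by
    have := card_sdiff_add_card_eq_card (subset_univ {s, t})
    rw [card_pair hst, card_univ, Fintype.card_fin] at this
    rw [eq_sub_iff_add_eq]
    exact_mod_cast this
  rw [← sum_sdiff (subset_univ {s, t}), sum_pair hst]
  linarith

end IsWOMNI

theorem stmt_2_general (m : ℕ) (c : Fin m → Fin m → Fin m → ℝ)
    (hc : IsWOMNI m c) (ρ : ℝ) (hρ : ρ ∈ Set.Icc (-1 : ℝ) 1)
    (s1 s2 : Fin m) (hs : s1 ≠ s2)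
    (M : ℝ) (hM : IsGreatest (Set.range fun q : Fin m => alphaW m c q q) M) :
    (∑ q, (betaW m c q s1 s2)^2 ≤ 2 * M^2 + ((m : ℝ) - 2)) ∧
    1 - ((1 - ρ) / (2 * (m : ℝ)^2)) * ∑ q, (betaW m c q s1 s2)^2
      ≥ 1 - ((1 - ρ) / (2 * (m : ℝ)^2)) * (2 * M^2 + (m : ℝ) - 2) := by
  have hsum := hc.sum_sq_betaW_le hs fun q => hM.2 ⟨q, rfl⟩
  have hcoeff : 0 ≤ (1 - ρ) / (2 * (m : ℝ) ^ 2) := div_nonneg (sub_nonneg.2 hρ.2) (by positivity)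
  refine ⟨hsum, ?_⟩
  linarith [mul_le_mul_of_nonneg_left hsum hcoeff]

theorem stmt_2 (m : ℕ) (hm : 2 ≤ m) (c : Fin m → Fin m → Fin m → ℝ)
    (hc : IsWOMNI m c) (ρ : ℝ) (hρ : ρ ∈ Set.Icc (-1 : ℝ) 1)
    (s1 s2 : Fin m) (hs : s1 ≠ s2)
    (M : ℝ) (hM : IsGreatest (Set.range fun q : Fin m => alphaW m c q q) M) :
    (∑ q, (betaW m c q s1 s2)^2 ≤ 2 * M^2 + ((m : ℝ) - 2)) ∧
    1 - ((1 - ρ) / (2 * (m : ℝ)^2)) * ∑ q, (betaW m c q s1 s2)^2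
      ≥ 1 - ((1 - ρ) / (2 * (m : ℝ)^2)) * (2 * M^2 + (m : ℝ) - 2) :=
  stmt_2_general m c hc ρ hρ s1 s2 hs M hM
end

section
/- Let m ≥ 2 and let c be a WOMNI weight tensor. If there exists a real number A such that α(q,q) = A for every q ∈ {1,…,m}, then necessarily A = (m+1)/2. -/
open Finset

namespace IsWOMNI

variable {m : ℕ} {c : Fin m → Fin m → Fin m → ℝ}

-- Symmetry turns `c ℓ ℓ q` into `c ℓ q ℓ`, the partner of `c q q ℓ` in the normalization `c(q,q,ℓ) + c(ℓ,q,ℓ) = 1`.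
theorem self_add_self_swap (hc : IsWOMNI m c) (q ℓ : Fin m) :
    c q q ℓ + c ℓ ℓ q = 1 + if q = ℓ then 1 else 0 := by
  obtain ⟨hsym, -, hdiag, -, hpair⟩ := hc
  by_cases hqℓ : q = ℓ
  · subst hqℓ
    simp only [hdiag, if_true]
  · rw [hsym ℓ ℓ q, (hpair q ℓ hqℓ).2, if_neg hqℓ, add_zero]

theorem two_mul_sum_alphaW_self (hc : IsWOMNI m c) :
    2 * ∑ q, alphaW m c q q = m * m + m := by
  have hswap : ∑ q, alphaW m c q q = ∑ q : Fin m, ∑ ℓ : Fin m, c ℓ ℓ q :=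
    Finset.sum_comm
  calc 2 * ∑ q, alphaW m c q q
      = ∑ q : Fin m, ∑ ℓ : Fin m, (c q q ℓ + c ℓ ℓ q) := by
        rw [two_mul]
        nth_rewrite 2 [hswap]
        simp only [alphaW, Finset.sum_add_distrib]
    _ = ∑ q : Fin m, ∑ ℓ : Fin m, (1 + if q = ℓ then (1 : ℝ) else 0) := by
        simp only [hc.self_add_self_swap]
    _ = m * m + m := by
        simp [Finset.sum_add_distrib]

end IsWOMNI

theorem stmt_4 (m : ℕ) (hm : 2 ≤ m) (c : Fin m → Fin m → Fin m → ℝ)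
    (hc : IsWOMNI m c) (A : ℝ) (hA : ∀ q : Fin m, alphaW m c q q = A) :
    A = ((m : ℝ) + 1) / 2 := by
  have hsum := hc.two_mul_sum_alphaW_self
  simp only [hA, Finset.sum_const, Finset.card_univ, Fintype.card_fin, nsmul_eq_mul] at hsum
  have hm0 : (m : ℝ) ≠ 0 := Nat.cast_ne_zero.mpr (by omega)
  field_simp
  exact mul_left_cancel₀ hm0 (by linarith)
end

section
/- Let m ≥ 2 and let c be a WOMNI weight tensor that induces flat correlation, with common value S = ∑_{q=1}^m β_q(s1,s2)² (the same for all pairs s1 ≠ s2). Then S ≥ m²/2; equivalently, for every ρ ∈ [−1,1] the flat correlation satisfies 𝔯(s1,s2) ≤ 3/4 + ρ/4 for all s1 ≠ s2. Thus the classical OMNI construction, which attains 𝔯(s1,s2) = 3/4 + ρ/4, induces the maximum possible flat correlation among WOMNI weight tensors. -/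
open Finset

/-! Average `S` over all ordered pairs: `m (m - 1) S = ∑_q ∑_{s₁,s₂} (α(s₁,q) - α(s₂,q))²`.
With the antisymmetric centred weights `b i j = c(i,i,j) - 1/2` and their row sums `r_q`,
the `q`-th column of `α` is `1/2 + b q · + (m/2 + r_q) e_q`, so its pairwise-difference sum is
`m²(m-1)/2 + (2m² - 4m) r_q + (2m - 8) r_q² + 2m ∑_k (b q k)²`. Antisymmetry gives `∑_q r_q = 0`,
and Cauchy–Schwarz over the `m - 1` off-diagonal entries of a row gives `∑ r_q² ≤ (m-1) ∑ b²`,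
which makes the last two terms nonnegative for `m ≥ 2`. Hence `m (m - 1) S ≥ m³ (m - 1) / 2`. -/

theorem sum_sum_sub_sq {ι : Type*} [Fintype ι] (a : ι → ℝ) :
    ∑ i, ∑ j, (a i - a j) ^ 2 = 2 * Fintype.card ι * ∑ i, a i ^ 2 - 2 * (∑ i, a i) ^ 2 := by
  simp only [sub_sq, sum_add_distrib, sum_sub_distrib, sum_const, card_univ, nsmul_eq_mul,
    ← mul_sum, ← sum_mul]
  ring

theorem sum_sum_sub_sq_of_add_ite {ι : Type*} [Fintype ι] [DecidableEq ι] (x t : ℝ)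
    (v : ι → ℝ) (q : ι) (hv : v q = 0) :
    ∑ i, ∑ j, ((x + v i + if i = q then t else 0) - (x + v j + if j = q then t else 0)) ^ 2 =
      2 * Fintype.card ι * (∑ i, v i ^ 2 + t ^ 2) - 2 * (∑ i, v i + t) ^ 2 := by
  have hsq : ∀ i, (v i + if i = q then t else 0) ^ 2 = v i ^ 2 + if i = q then t ^ 2 else 0 := by
    intro i
    split_ifs with h
    · subst h; simp [hv]
    · ring
  have hshift := sum_sum_sub_sq fun i => v i + if i = q then t else 0
  simp only [hsq, sum_add_distrib, sum_ite_eq', mem_univ, if_true] at hshift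
  rw [← hshift]
  congr! 3
  ring

theorem sq_sum_le_of_eq_zero {ι : Type*} [Fintype ι] (v : ι → ℝ) (q : ι) (hv : v q = 0) :
    (∑ i, v i) ^ 2 ≤ (Fintype.card ι - 1) * ∑ i, v i ^ 2 := by
  classical
  have hcard : ((univ.erase q).card : ℝ) = Fintype.card ι - 1 := by
    rw [card_erase_of_mem (mem_univ q), card_univ,
      Nat.cast_pred (Fintype.card_pos_iff.mpr ⟨q⟩)]
  rw [← sum_erase univ hv, ← sum_erase univ (f := fun i => v i ^ 2) (a := q) (by simp [hv]),
    ← hcard]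
  exact sq_sum_le_card_mul_sum_sq

theorem sum_sum_eq_of_offDiag_eq {ι : Type*} [Fintype ι] (f : ι → ι → ℝ) (S : ℝ)
    (hdiag : ∀ i, f i i = 0) (hoff : ∀ i j, i ≠ j → f i j = S) :
    ∑ i, ∑ j, f i j = Fintype.card ι * (Fintype.card ι - 1) * S := by
  classical
  have hf : ∀ i j, f i j = S - if i = j then S else 0 := by
    intro i j
    by_cases hij : i = j
    · subst hij; simp [hdiag]
    · simp [hoff i j hij, hij]
  simp only [hf, sum_sub_distrib, sum_ite_eq, mem_univ, if_true, sum_const, card_univ,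
    nsmul_eq_mul]
  ring

section WOMNI

variable {m : ℕ}

noncomputable def centeredWeight (c : Fin m → Fin m → Fin m → ℝ) (i j : Fin m) : ℝ :=
  if i = j then 0 else c i i j - 1 / 2

noncomputable def centeredRowSum (c : Fin m → Fin m → Fin m → ℝ) (i : Fin m) : ℝ :=
  ∑ j, centeredWeight c i j

variable {c : Fin m → Fin m → Fin m → ℝ}

@[simp]
theorem centeredWeight_self (i : Fin m) : centeredWeight c i i = 0 := if_pos rfl

theorem centeredWeight_swap (hc : IsWOMNI m c) (i j : Fin m) :
    centeredWeight c j i = -centeredWeight c i j := by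
  by_cases h : i = j
  · subst h; simp
  · have hsum := (hc.2.2.2.2 i j h).2
    have hsymm := hc.1 j i j
    simp only [centeredWeight, if_neg (Ne.symm h), if_neg h]
    linarith

theorem sum_centeredRowSum (hc : IsWOMNI m c) : ∑ i, centeredRowSum c i = 0 := by
  have h : ∑ i, centeredRowSum c i = -∑ i, centeredRowSum c i := by
    calc ∑ i, ∑ j, centeredWeight c i j
        = ∑ i, ∑ j, centeredWeight c j i := sum_comm
      _ = ∑ i, ∑ j, -centeredWeight c i j :=
        sum_congr rfl fun i _ => sum_congr rfl fun j _ => centeredWeight_swap hc i j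
      _ = -∑ i, ∑ j, centeredWeight c i j := by simp only [sum_neg_distrib]
  linarith

theorem alphaW_eq (hc : IsWOMNI m c) (k q : Fin m) :
    alphaW m c k q =
      1 / 2 + centeredWeight c q k + if k = q then m / 2 + centeredRowSum c q else 0 := by
  by_cases hkq : k = q
  · subst hkq
    have hdiag : ∀ ℓ, c k k ℓ = 1 / 2 + centeredWeight c k ℓ + if ℓ = k then 1 / 2 else 0 := by
      intro ℓ
      by_cases h : ℓ = k
      · subst h
        simp only [centeredWeight, hc.2.2.1, if_true]
        norm_num
      · simp only [centeredWeight, if_neg h, if_neg (Ne.symm h)]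
        ring
    rw [alphaW, sum_congr rfl fun ℓ _ => hdiag ℓ]
    simp only [sum_add_distrib, sum_ite_eq', mem_univ, if_true, sum_const, card_univ,
      Fintype.card_fin, nsmul_eq_mul, centeredRowSum, centeredWeight_self]
    ring
  · -- `c q k ℓ` vanishes unless `ℓ = q`
    rw [alphaW, sum_eq_single q (fun ℓ _ hℓ => hc.2.1 q k ℓ (Ne.symm hkq) (Ne.symm hℓ))
      (by simp), hc.1 q k q]
    simp only [centeredWeight, if_neg hkq, if_neg (Ne.symm hkq)]
    ring

theorem sum_sum_sub_sq_alphaW (hc : IsWOMNI m c) (q : Fin m) :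
    ∑ i, ∑ j, (alphaW m c i q - alphaW m c j q) ^ 2 =
      m ^ 2 * (m - 1) / 2 + (2 * m ^ 2 - 4 * m) * centeredRowSum c q +
        (2 * m - 8) * centeredRowSum c q ^ 2 + 2 * m * ∑ k, centeredWeight c q k ^ 2 := by
  simp only [alphaW_eq hc]
  rw [sum_sum_sub_sq_of_add_ite _ _ _ q (centeredWeight_self q), ← centeredRowSum,
    Fintype.card_fin]
  ring

theorem sum_sum_sum_sq_betaW (hc : IsWOMNI m c) :
    ∑ s₁, ∑ s₂, ∑ q, betaW m c q s₁ s₂ ^ 2 =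
      m ^ 3 * (m - 1) / 2 + (2 * m - 8) * ∑ q, centeredRowSum c q ^ 2 +
        2 * m * ∑ q, ∑ k, centeredWeight c q k ^ 2 := by
  have hswap : ∑ s₁, ∑ s₂, ∑ q, betaW m c q s₁ s₂ ^ 2 =
      ∑ q, ∑ s₁, ∑ s₂, (alphaW m c s₁ q - alphaW m c s₂ q) ^ 2 := by
    calc ∑ s₁, ∑ s₂, ∑ q, betaW m c q s₁ s₂ ^ 2
        = ∑ s₁, ∑ q, ∑ s₂, betaW m c q s₁ s₂ ^ 2 := sum_congr rfl fun _ _ => sum_comm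
      _ = _ := sum_comm
  simp only [hswap, sum_sum_sub_sq_alphaW hc, sum_add_distrib, ← mul_sum,
    sum_centeredRowSum hc, sum_const, card_univ, Fintype.card_fin, nsmul_eq_mul]
  ring

theorem sum_sq_centeredRowSum_le :
    ∑ q, centeredRowSum c q ^ 2 ≤ (m - 1) * ∑ q, ∑ k, centeredWeight c q k ^ 2 := by
  rw [mul_sum]
  refine sum_le_sum fun q _ => ?_
  simpa only [Fintype.card_fin, centeredRowSum] using
    sq_sum_le_of_eq_zero (centeredWeight c q) q (centeredWeight_self q)

theorem le_sum_sum_sum_sq_betaW (hc : IsWOMNI m c) (hm : 2 ≤ m) :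
    m ^ 3 * (m - 1) / 2 ≤ ∑ s₁, ∑ s₂, ∑ q, betaW m c q s₁ s₂ ^ 2 := by
  have hm' : (2 : ℝ) ≤ m := by exact_mod_cast hm
  have hCS := sum_sq_centeredRowSum_le (c := c)
  rw [sum_sum_sum_sq_betaW hc]
  set R := ∑ q, centeredRowSum c q ^ 2
  set B := ∑ q, ∑ k, centeredWeight c q k ^ 2
  have hR : 0 ≤ R := sum_nonneg fun _ _ => sq_nonneg _
  -- `(2m - 8) R + 2m B ≥ 0` from `R ≤ (m - 1) B`, since `2m ≥ (8 - 2m)(m - 1)` for `m ≥ 2`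
  nlinarith [mul_nonneg (sq_nonneg ((m : ℝ) - 2)) hR,
    mul_nonneg (by linarith : (0 : ℝ) ≤ m) (sub_nonneg.2 hCS)]

end WOMNI

theorem stmt_10 (m : ℕ) (hm : 2 ≤ m) (c : Fin m → Fin m → Fin m → ℝ)
    (hc : IsWOMNI m c) (S : ℝ)
    (hS : ∀ s1 s2 : Fin m, s1 ≠ s2 → ∑ q, (betaW m c q s1 s2)^2 = S) :
    S ≥ (m : ℝ)^2 / 2 ∧
    ∀ ρ ∈ Set.Icc (-1 : ℝ) 1, ∀ s1 s2 : Fin m, s1 ≠ s2 →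
      1 - ((1 - ρ) / (2 * (m : ℝ)^2)) * ∑ q, (betaW m c q s1 s2)^2 ≤ 3/4 + ρ/4 := by
  have hm' : (2 : ℝ) ≤ m := by exact_mod_cast hm
  have htotal : ∑ s₁, ∑ s₂, ∑ q, betaW m c q s₁ s₂ ^ 2 = m * (m - 1) * S := by
    simpa using sum_sum_eq_of_offDiag_eq _ S (fun s => by simp [betaW]) hS
  have hSge : m ^ 2 / 2 ≤ S := by
    have hbound := le_sum_sum_sum_sq_betaW hc hm
    rw [htotal] at hbound
    nlinarith [mul_pos (by linarith : (0 : ℝ) < m) (by linarith : (0 : ℝ) < m - 1)]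
  refine ⟨hSge, fun ρ hρ s₁ s₂ hs => ?_⟩
  have hscaled : (1 - ρ) / 4 ≤ (1 - ρ) / (2 * m ^ 2) * S :=
    calc (1 - ρ) / 4 = (1 - ρ) / (2 * m ^ 2) * (m ^ 2 / 2) := by field_simp; ring
      _ ≤ (1 - ρ) / (2 * m ^ 2) * S := by
        gcongr
        exact div_nonneg (sub_nonneg.2 hρ.2) (by positivity)
  rw [hS s₁ s₂ hs]
  linarith
end

section
/- Let m = 3 and let c be any WOMNI weight tensor that induces flat correlation, with common value S = ∑_{q=1}^3 β_q(s1,s2)² (the same for all three pairs s1 ≠ s2). Then S ≤ 6; equivalently, for every ρ ∈ [−1,1] the flat correlation satisfies 𝔯(s1,s2) ≥ 2/3 + ρ/3. Hence the value 2/3 + ρ/3 attained by 𝔐^W_{3−} and 𝔐^W_{3+} is the minimum flat correlation among all WOMNI tensors for m = 3. -/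
open Finset

/-! Off the diagonal a WOMNI tensor has `α(k,q) = c(q,q,k)`, and `c(j,j,i) = 1 - c(i,i,j)`, so for
`m = 3` every `β_q(s1,s2)` is affine in `x = c(0,0,1)`, `y = c(0,0,2)`, `z = c(1,1,2) ∈ [0,1]`.
The three pair sums `S(s1,s2)` add up to `18` minus a nonnegative combination of products of
nonnegative factors such as `x(1-x)`, and under flat correlation this total is `3S`. -/

namespace IsWOMNI

variable {m : ℕ} {c : Fin m → Fin m → Fin m → ℝ}

theorem weight_add_weight (hc : IsWOMNI m c) {i j : Fin m} (hij : i ≠ j) :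
    c i i j + c j j i = 1 := by
  rw [hc.1 j j i]
  exact (hc.2.2.2.2 i j hij).2

end IsWOMNI

theorem IsWOMNI.sum_betaW_sq_pairs_le {c : Fin 3 → Fin 3 → Fin 3 → ℝ} (hc : IsWOMNI 3 c) :
    ∑ q, betaW 3 c q 0 1 ^ 2 + ∑ q, betaW 3 c q 0 2 ^ 2 + ∑ q, betaW 3 c q 1 2 ^ 2 ≤ 18 := by
  obtain ⟨hx0, hx1⟩ := (hc.2.2.2.2 0 1 (by decide)).1
  obtain ⟨hy0, hy1⟩ := (hc.2.2.2.2 0 2 (by decide)).1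
  obtain ⟨hz0, hz1⟩ := (hc.2.2.2.2 1 2 (by decide)).1
  have h10 : c 1 1 0 = 1 - c 0 0 1 := by
    linarith [hc.weight_add_weight (i := 0) (j := 1) (by decide)]
  have h20 : c 2 2 0 = 1 - c 0 0 2 := by
    linarith [hc.weight_add_weight (i := 0) (j := 2) (by decide)]
  have h21 : c 2 2 1 = 1 - c 1 1 2 := by
    linarith [hc.weight_add_weight (i := 1) (j := 2) (by decide)]
  simp (disch := decide) only [betaW, Fin.sum_univ_three, hc.alphaW_of_ne]
  simp only [alphaW, Fin.sum_univ_three, hc.2.2.1, h10, h20, h21]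
  -- the total is `18 - (4x(1-x) + 4y(1-y) + 4z(1-z) + 2xy + 2(1-y)(1-z) + 2z(1-x))`
  linarith [mul_nonneg hx0 (sub_nonneg.2 hx1), mul_nonneg hy0 (sub_nonneg.2 hy1),
    mul_nonneg hz0 (sub_nonneg.2 hz1), mul_nonneg hx0 hy0,
    mul_nonneg (sub_nonneg.2 hy1) (sub_nonneg.2 hz1), mul_nonneg hz0 (sub_nonneg.2 hx1)]

theorem stmt_14 (c : Fin 3 → Fin 3 → Fin 3 → ℝ) (hc : IsWOMNI 3 c) (S : ℝ)
    (hS : ∀ s1 s2 : Fin 3, s1 ≠ s2 → ∑ q, (betaW 3 c q s1 s2)^2 = S) :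
    S ≤ 6 ∧
    ∀ ρ ∈ Set.Icc (-1 : ℝ) 1, ∀ s1 s2 : Fin 3, s1 ≠ s2 →
      1 - ((1 - ρ) / (2 * (3 : ℝ)^2)) * ∑ q, (betaW 3 c q s1 s2)^2 ≥ 2/3 + ρ/3 := by
  have hS_le : S ≤ 6 := by
    have htotal := hc.sum_betaW_sq_pairs_le
    rw [hS 0 1 (by decide), hS 0 2 (by decide), hS 1 2 (by decide)] at htotal
    linarith
  refine ⟨hS_le, fun ρ hρ s1 s2 hne => ?_⟩
  rw [hS s1 s2 hne]
  nlinarith [mul_le_mul_of_nonneg_left hS_le (sub_nonneg.2 hρ.2)]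
end

section
/- Let m = 4, let a = (5 − √17)/2 and b = (√17 − 3)/2 (so that a, b ∈ [0,1] and a + b = 1), and let c be the WOMNI weight tensor determined by c(2,1,2) = 1, c(1,1,3) = 1, c(3,2,3) = 1 (with complementary weights 0), and c(i,i,4) = a, c(4,i,4) = b for i = 1,2,3. Then for every pair s1 ≠ s2 ∈ {1,…,4}, ∑_{q=1}^4 β_q(s1,s2)² = 42 − 8√17; hence for every ρ ∈ [−1,1] the induced correlation is flat with 𝔯(s1,s2) = (4√17 − 5)/16 + ((21 − 4√17)/16)·ρ, which for ρ < 1 is strictly smaller than the classical OMNI flat correlation 3/4 + ρ/4. -/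
open Finset

/-!
A WOMNI tensor is determined by its weights `c q q k`: off the diagonal `α(k,q) = c q q k`, and
`α(q,q)` is the row sum `∑ ℓ, c q q ℓ`. For the tensor at hand the weights depend on `a` alone
(`b = 1 - a`), and the pairs `s1 ≠ s2` fall into two classes up to the cyclic symmetry of
`{0,1,2}` (indices of `Fin 4`): `S = 2a² + 6a + 6` for pairs inside `{0,1,2}` and
`S = 6a² - 14a + 14` for pairs containing `3`. Both equal `2 + 16a` exactly when `a² - 5a + 2 = 0`, whose root in `[0,1]` is
`(5 - √17)/2`. Comparing with OMNI amounts to `42 - 8√17 > 8`, i.e. `√17 < 17/4`.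
-/

namespace IsWOMNI

variable {m : ℕ} {c : Fin m → Fin m → Fin m → ℝ}

theorem swap_weight (hc : IsWOMNI m c) {i j : Fin m} (hij : i ≠ j) : c j j i = 1 - c i i j := by
  rw [hc.1 j j i, eq_sub_iff_add_eq, add_comm]
  exact (hc.2.2.2.2 i j hij).2

theorem alphaW_eq (hc : IsWOMNI m c) (k q : Fin m) :
    alphaW m c k q = if k = q then ∑ ℓ, c q q ℓ else c q q k := by
  split_ifs with hkq
  · rw [hkq, alphaW]
  · rw [alphaW, Finset.sum_eq_single q, hc.1]
    · exact fun ℓ _ hℓq => hc.2.1 q k ℓ (Ne.symm hkq) (Ne.symm hℓq)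
    · simp

end IsWOMNI

/-- The weights `c q q k` of the tensor of the theorem, with `b = 1 - a`. -/
def flatWeights4 (a : ℝ) : Fin 4 → Fin 4 → ℝ :=
  ![![1, 0, 1, a], ![1, 1, 0, a], ![0, 1, 1, a], ![1 - a, 1 - a, 1 - a, 1]]

theorem IsWOMNI.weight_eq_flatWeights4 {c : Fin 4 → Fin 4 → Fin 4 → ℝ} (hc : IsWOMNI 4 c)
    {a b : ℝ} (hspec1 : c 1 0 1 = 1) (hspec2 : c 0 0 2 = 1) (hspec3 : c 2 1 2 = 1)
    (hspec4 : ∀ i : Fin 4, i ≠ 3 → c i i 3 = a ∧ c 3 i 3 = b) (q k : Fin 4) :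
    c q q k = flatWeights4 a q k := by
  have h110 : c 1 1 0 = 1 := by rw [hc.1, hspec1]
  have h221 : c 2 2 1 = 1 := by rw [hc.1, hspec3]
  have h001 : c 0 0 1 = 0 := by rw [hc.swap_weight (by decide : (1 : Fin 4) ≠ 0), h110, sub_self]
  have h112 : c 1 1 2 = 0 := by rw [hc.swap_weight (by decide : (2 : Fin 4) ≠ 1), h221, sub_self]
  have h220 : c 2 2 0 = 0 := by rw [hc.swap_weight (by decide : (0 : Fin 4) ≠ 2), hspec2, sub_self]
  have h33i : ∀ i : Fin 4, i ≠ 3 → c 3 3 i = 1 - a := fun i hi => by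
    rw [hc.swap_weight hi, (hspec4 i hi).1]
  fin_cases q <;> fin_cases k <;>
    simp [flatWeights4, hc.2.2.1, hspec2, h110, h221, h001, h112, h220, h33i, hspec4]

theorem sum_sq_betaW_of_weight_eq_flatWeights4 {c : Fin 4 → Fin 4 → Fin 4 → ℝ}
    (hc : IsWOMNI 4 c) {a : ℝ} (hw : ∀ q k, c q q k = flatWeights4 a q k)
    (ha : a ^ 2 - 5 * a + 2 = 0) {s1 s2 : Fin 4} (hs : s1 ≠ s2) :
    ∑ q, (betaW 4 c q s1 s2) ^ 2 = 2 + 16 * a := by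
  simp only [betaW, hc.alphaW_eq, hw]
  fin_cases s1 <;> fin_cases s2 <;> first
    | exact absurd rfl hs
    | simp only [flatWeights4, Fin.sum_univ_four, Fin.isValue, Fin.zero_eta, Fin.mk_one,
        Fin.reduceFinMk, Fin.reduceEq, Matrix.cons_val', Matrix.cons_val_fin_one,
        Matrix.cons_val_zero, Matrix.cons_val_one, Matrix.cons_val, ↓reduceIte]
      first
        | linear_combination (2 : ℝ) * ha
        | linear_combination (6 : ℝ) * ha

theorem stmt_15_general (c : Fin 4 → Fin 4 → Fin 4 → ℝ) (hc : IsWOMNI 4 c)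
    (a b : ℝ) (ha : a = (5 - Real.sqrt 17) / 2)
    (hspec1 : c 1 0 1 = 1) (hspec2 : c 0 0 2 = 1) (hspec3 : c 2 1 2 = 1)
    (hspec4 : ∀ i : Fin 4, i ≠ 3 → c i i 3 = a ∧ c 3 i 3 = b) :
    ∀ s1 s2 : Fin 4, s1 ≠ s2 →
      (∑ q, (betaW 4 c q s1 s2)^2 = 42 - 8 * Real.sqrt 17) ∧
      ∀ ρ ∈ Set.Icc (-1 : ℝ) 1,
        (1 - ((1 - ρ) / (2 * (4 : ℝ)^2)) * ∑ q, (betaW 4 c q s1 s2)^2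
          = (4 * Real.sqrt 17 - 5) / 16 + ((21 - 4 * Real.sqrt 17) / 16) * ρ) ∧
        (ρ < 1 →
          1 - ((1 - ρ) / (2 * (4 : ℝ)^2)) * ∑ q, (betaW 4 c q s1 s2)^2
            < 3/4 + ρ/4) := by
  have hsq : Real.sqrt 17 ^ 2 = 17 := Real.sq_sqrt (by norm_num)
  have ha_root : a ^ 2 - 5 * a + 2 = 0 := by rw [ha]; linear_combination hsq / 4
  have hS : ∀ s1 s2 : Fin 4, s1 ≠ s2 → ∑ q, (betaW 4 c q s1 s2)^2 = 42 - 8 * Real.sqrt 17 := by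
    intro s1 s2 hs
    rw [sum_sq_betaW_of_weight_eq_flatWeights4 hc
      (hc.weight_eq_flatWeights4 hspec1 hspec2 hspec3 hspec4) ha_root hs, ha]
    ring
  have hsqrt : Real.sqrt 17 < 17 / 4 := (Real.sqrt_lt' (by norm_num)).mpr (by norm_num)
  intro s1 s2 hs
  refine ⟨hS s1 s2 hs, fun ρ _ => ⟨by rw [hS s1 s2 hs]; ring, fun hρ => ?_⟩⟩
  rw [hS s1 s2 hs]
  linarith [mul_pos (sub_pos.mpr hρ) (sub_pos.mpr hsqrt)]

theorem stmt_15 (c : Fin 4 → Fin 4 → Fin 4 → ℝ) (hc : IsWOMNI 4 c)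
    (a b : ℝ) (ha : a = (5 - Real.sqrt 17) / 2) (hb : b = (Real.sqrt 17 - 3) / 2)
    (hspec1 : c 1 0 1 = 1) (hspec2 : c 0 0 2 = 1) (hspec3 : c 2 1 2 = 1)
    (hspec4 : ∀ i : Fin 4, i ≠ 3 → c i i 3 = a ∧ c 3 i 3 = b) :
    ∀ s1 s2 : Fin 4, s1 ≠ s2 →
      (∑ q, (betaW 4 c q s1 s2)^2 = 42 - 8 * Real.sqrt 17) ∧
      ∀ ρ ∈ Set.Icc (-1 : ℝ) 1,
        (1 - ((1 - ρ) / (2 * (4 : ℝ)^2)) * ∑ q, (betaW 4 c q s1 s2)^2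
          = (4 * Real.sqrt 17 - 5) / 16 + ((21 - 4 * Real.sqrt 17) / 16) * ρ) ∧
        (ρ < 1 →
          1 - ((1 - ρ) / (2 * (4 : ℝ)^2)) * ∑ q, (betaW 4 c q s1 s2)^2
            < 3/4 + ρ/4) :=
  stmt_15_general c hc a b ha hspec1 hspec2 hspec3 hspec4
end
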